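/- Let n ≥ 2 and let Λ ⊆ S^n be a closed subset such that the open set Ω = S^n \ Λ satisfies the weak Koebe–Maskit condition and has at least two connected components. Then Λ is doubly stable: for every ξ ∈ Λ there exists a circle C in S^n with ξ ∈ C such that every sequence of circles (C_k) in S^n converging to C satisfies that limsup (C_k ∩ Λ) contains at least two points. (This is the group-free form of the paper's Lemma 4.6.) -/

import Mathlib

open Metric Set

noncomputable section

/-- `Euc k` is the Euclidean space `ℝ^{k+1}`. -/
abbrev Euc (k : ℕ) : Type := EuclideanSpace ℝ (Fin (k+1))

/-- The unit sphere `S^k ⊆ ℝ^{k+1}`. -/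
def unitSphere (k : ℕ) : Set (Euc k) := Metric.sphere 0 1

/-- A circle in `S^n`: the intersection of `S^n` with a 2-dimensional affine
subspace of `ℝ^{n+1}`, provided this intersection is infinite. -/
def IsCircle (n : ℕ) (C : Set (Euc n)) : Prop :=
  ∃ P : AffineSubspace ℝ (Euc n),
    Module.finrank ℝ P.direction = 2 ∧ C = unitSphere n ∩ (P : Set (Euc n)) ∧ C.Infinite

/-- A codimension-one sphere in `S^m`: the intersection of `S^m` with an
`m`-dimensional affine subspace of `ℝ^{m+1}`, provided it is infinite. -/
def IsCodimOneSphere (m : ℕ) (S : Set (Euc m)) : Prop :=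
  ∃ H : AffineSubspace ℝ (Euc m),
    Module.finrank ℝ H.direction = m ∧ S = unitSphere m ∩ (H : Set (Euc m)) ∧ S.Infinite

/-- Convergence of a sequence of subsets in the Hausdorff distance. -/
def SetsConvergeTo {X : Type*} [MetricSpace X] (K : ℕ → Set X) (L : Set X) : Prop :=
  Filter.Tendsto (fun k => Metric.hausdorffDist (K k) L) Filter.atTop (nhds 0)

/-- `limsup` of a sequence of sets: `⋂_N closure (⋃_{k ≥ N} S_k)`. -/
def setLimsup {X : Type*} [TopologicalSpace X] (S : ℕ → Set X) : Set X :=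
  ⋂ N : ℕ, closure (⋃ k ≥ N, S k)

/-- The weak Koebe–Maskit condition: for every `ε > 0`, only finitely many
connected components of `Ω` have diameter greater than `ε`. -/
def WKM {X : Type*} [MetricSpace X] (Ω : Set X) : Prop :=
  ∀ ε > 0, {U : Set X | (∃ x ∈ Ω, U = connectedComponentIn Ω x) ∧ ε < Metric.diam U}.Finite

/-- `Λ ⊆ S^n` is doubly stable if every `ξ ∈ Λ` lies on a circle `C` such that for
every sequence of circles converging to `C` the limsup of the slices `C_k ∩ Λ`
contains at least two points. -/
def DoublyStable (n : ℕ) (Λ : Set (Euc n)) : Prop :=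
  ∀ ξ ∈ Λ, ∃ C : Set (Euc n), IsCircle n C ∧ ξ ∈ C ∧
    ∀ Ck : ℕ → Set (Euc n), (∀ k, IsCircle n (Ck k)) → SetsConvergeTo Ck C →
      (setLimsup (fun k => Ck k ∩ Λ)).Nontrivial

/-! Pick `x`, `y` in different components of `Ω = S^n \ Λ` and let `C` be the circle through
`ξ`, `x` and `y`. If circles `Cₖ → C` had slices `Cₖ ∩ Λ` accumulating at no more than one point
`ζ`, a closed half-space `H` containing `x` and `y` but not `ζ` would eventually miss `Cₖ ∩ Λ`.
A circle meets a half-space in an arc, so `Cₖ ∩ H` is then a connected subset of `Ω`; as the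
sphere is locally connected, it meets the components of both `x` and `y` for large `k`, which
is absurd. -/

open Real RealInnerProductSpace Filter Topology Function Module EuclideanGeometry

lemma Real.cos_le_max_of_le_of_le {u₁ u u₂ : ℝ} (hu₁ : 0 ≤ u₁) (h₁ : u₁ ≤ u) (h₂ : u ≤ u₂)
    (hu₂ : u₂ ≤ 2 * π) : cos u ≤ max (cos u₁) (cos u₂) := by
  rcases le_total u π with hu | hu
  · exact le_max_of_le_left (cos_le_cos_of_nonneg_of_le_pi hu₁ hu h₁)
  · refine le_max_of_le_right ?_
    rw [← cos_two_pi_sub u, ← cos_two_pi_sub u₂]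
    exact cos_le_cos_of_nonneg_of_le_pi (by linarith) (by linarith) (by linarith)

lemma Real.exists_mul_cos_sub_eq (a b : ℝ) :
    ∃ R φ : ℝ, 0 ≤ R ∧ ∀ θ, a * cos θ + b * sin θ = R * cos (θ - φ) := by
  refine ⟨‖(⟨a, b⟩ : ℂ)‖, Complex.arg ⟨a, b⟩, norm_nonneg _, fun θ => ?_⟩
  have ha := Complex.norm_mul_cos_arg ⟨a, b⟩
  have hb := Complex.norm_mul_sin_arg ⟨a, b⟩
  simp only at ha hb
  rw [cos_sub]
  linear_combination (-cos θ) * ha - sin θ * hb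

lemma Function.Periodic.isPreconnected_image_setOf_cos_sin_le {X : Type*} [TopologicalSpace X]
    {f : ℝ → X} (hf : Continuous f) (hper : Periodic f (2 * π)) (a b m : ℝ) :
    IsPreconnected (f '' {θ | a * cos θ + b * sin θ ≤ m}) := by
  obtain ⟨R, φ, hR, hab⟩ := exists_mul_cos_sub_eq a b
  simp_rw [hab]
  -- On `[φ, φ + 2π]`, `cos (· - φ)` first decreases and then increases.
  set I := Icc φ (φ + 2 * π) ∩ {θ | R * cos (θ - φ) ≤ m}
  have hI : I.OrdConnected := by
    refine ⟨fun θ₁ h₁ θ₂ h₂ θ hθ => ⟨⟨h₁.1.1.trans hθ.1, hθ.2.trans h₂.1.2⟩, ?_⟩⟩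
    have := cos_le_max_of_le_of_le (sub_nonneg.2 h₁.1.1) (sub_le_sub_right hθ.1 φ)
      (sub_le_sub_right hθ.2 φ) (by linarith [h₂.1.2])
    calc R * cos (θ - φ) ≤ R * max (cos (θ₁ - φ)) (cos (θ₂ - φ)) := by gcongr
      _ = max (R * cos (θ₁ - φ)) (R * cos (θ₂ - φ)) := mul_max_of_nonneg _ _ hR
      _ ≤ m := max_le h₁.2 h₂.2
  convert hI.isPreconnected.image f hf.continuousOn using 1
  refine (image_mono inter_subset_right).antisymm' ?_
  rintro _ ⟨θ, hθ, rfl⟩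
  obtain ⟨k, hk, -⟩ := existsUnique_add_zsmul_mem_Ico two_pi_pos θ φ
  have hcos : cos (θ + k • (2 * π) - φ) = cos (θ - φ) := by
    rw [add_sub_right_comm]; exact cos_periodic.zsmul k _
  refine ⟨θ + k • (2 * π), ⟨Ico_subset_Icc_self hk, ?_⟩, hper.zsmul k θ⟩
  rwa [mem_ofPred_eq, hcos]

section InnerProductSpace

variable {E : Type*} [NormedAddCommGroup E] [InnerProductSpace ℝ E]

def circleParam (c e₁ e₂ : E) (ρ θ : ℝ) : E := c + (ρ * cos θ) • e₁ + (ρ * sin θ) • e₂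

lemma continuous_circleParam (c e₁ e₂ : E) (ρ : ℝ) : Continuous (circleParam c e₁ e₂ ρ) := by
  unfold circleParam; fun_prop

lemma periodic_circleParam (c e₁ e₂ : E) (ρ : ℝ) : Periodic (circleParam c e₁ e₂ ρ) (2 * π) := by
  intro θ; simp only [circleParam, cos_add_two_pi, sin_add_two_pi]

lemma isPreconnected_range_circleParam_inter_halfspace (c e₁ e₂ : E) (ρ : ℝ) (v : E) (t : ℝ) :
    IsPreconnected (range (circleParam c e₁ e₂ ρ) ∩ {p | ⟪v, p⟫ ≤ t}) := by
  have hinner : ∀ θ, ⟪v, circleParam c e₁ e₂ ρ θ⟫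
      = ⟪v, c⟫ + (ρ * ⟪v, e₁⟫) * cos θ + (ρ * ⟪v, e₂⟫) * sin θ := fun θ => by
    simp only [circleParam, inner_add_right, real_inner_smul_right]; ring
  convert (periodic_circleParam c e₁ e₂ ρ).isPreconnected_image_setOf_cos_sin_le
    (continuous_circleParam c e₁ e₂ ρ) (ρ * ⟪v, e₁⟫) (ρ * ⟪v, e₂⟫) (t - ⟪v, c⟫) using 1
  ext p
  simp only [mem_inter_iff, mem_range, mem_ofPred_eq, mem_image]
  constructor
  · rintro ⟨⟨θ, rfl⟩, hθ⟩
    exact ⟨θ, by linarith [hinner θ], rfl⟩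
  · rintro ⟨θ, hθ, rfl⟩
    exact ⟨⟨θ, rfl⟩, by linarith [hinner θ]⟩

lemma AffineSubspace.sphere_inter_eq_range_circleParam {P : AffineSubspace ℝ E}
    (hP : finrank ℝ P.direction = 2) {c : E} (hc : c ∈ P) {ρ : ℝ} (hρ : 0 ≤ ρ) :
    ∃ e₁ e₂ : E, sphere c ρ ∩ P = range (circleParam c e₁ e₂ ρ) := by
  have : FiniteDimensional ℝ P.direction := Module.finite_of_finrank_eq_succ hP
  let b : OrthonormalBasis (Fin 2) ℝ P.direction :=
    (stdOrthonormalBasis ℝ P.direction).reindex (finCongr hP)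
  let L := Complex.isometryOfOrthonormal b
  have hL : ∀ θ, circleParam c (b 0) (b 1) ρ θ = c + (L (circleMap 0 ρ θ) : E) := fun θ => by
    simp [L, circleParam, Complex.isometryOfOrthonormal_apply, circleMap, add_assoc]
  refine ⟨b 0, b 1, Set.ext fun p => ⟨fun ⟨hpc, hpP⟩ => ?_, ?_⟩⟩
  · let z := L.symm ⟨p - c, AffineSubspace.vsub_mem_direction hpP hc⟩
    have hz : z ∈ sphere (0 : ℂ) |ρ| := by
      simpa [z, abs_of_nonneg hρ, ← dist_eq_norm] using hpc
    rw [← range_circleMap] at hz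
    obtain ⟨θ, hθ⟩ := hz
    refine ⟨θ, ?_⟩
    rw [hL, hθ]
    simp [z]
  · rintro ⟨θ, rfl⟩
    refine ⟨?_, ?_⟩
    · rw [hL, Metric.mem_sphere, dist_eq_norm, add_sub_cancel_left]
      exact (L.norm_map _).trans (by rw [norm_circleMap_zero, abs_of_nonneg hρ])
    · rw [hL, add_comm]
      exact AffineSubspace.vadd_mem_of_mem_direction (L _).2 hc

lemma AffineSubspace.sphere_inter_eq_sphere_orthogonalProjection_inter (P : AffineSubspace ℝ E)
    [Nonempty P] [P.direction.HasOrthogonalProjection] {o p₀ : E} {r : ℝ}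
    (hp₀ : p₀ ∈ sphere o r ∩ P) :
    sphere o r ∩ P =
      sphere (orthogonalProjection P o : E) (dist p₀ (orthogonalProjection P o)) ∩ P := by
  set c : E := (orthogonalProjection P o : E)
  have hpyth : ∀ p ∈ P, dist p o ^ 2 = dist p c ^ 2 + dist o c ^ 2 := fun p hp => by
    simpa only [sq] using
      dist_sq_eq_dist_orthogonalProjection_sq_add_dist_orthogonalProjection_sq o hp
  ext p
  refine and_congr_left fun hp => ?_
  rw [Metric.mem_sphere, Metric.mem_sphere, ← hp₀.1, ← sq_eq_sq₀ dist_nonneg dist_nonneg,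
    ← sq_eq_sq₀ dist_nonneg dist_nonneg, hpyth p hp, hpyth p₀ hp₀.2, add_left_inj]

lemma AffineSubspace.isPreconnected_sphere_inter_inter_halfspace {P : AffineSubspace ℝ E}
    (hP : finrank ℝ P.direction = 2) (o : E) (r : ℝ) (v : E) (t : ℝ) :
    IsPreconnected (sphere o r ∩ P ∩ {p | ⟪v, p⟫ ≤ t}) := by
  rcases (sphere o r ∩ (P : Set E)).eq_empty_or_nonempty with h | ⟨p₀, hp₀⟩
  · rw [h, empty_inter]
    exact isPreconnected_empty
  have : Nonempty P := ⟨⟨p₀, hp₀.2⟩⟩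
  have : FiniteDimensional ℝ P.direction := Module.finite_of_finrank_eq_succ hP
  rw [P.sphere_inter_eq_sphere_orthogonalProjection_inter hp₀]
  obtain ⟨e₁, e₂, h⟩ :=
    P.sphere_inter_eq_range_circleParam hP (orthogonalProjection P o).2 (dist_nonneg (x := p₀))
  rw [h]
  exact isPreconnected_range_circleParam_inter_halfspace _ _ _ _ v t

lemma exists_inner_lt_of_subsingleton {L : Set E} (hL : L.Subsingleton) (hLs : L ⊆ sphere 0 1)
    {x y : E} (hx : x ∈ sphere 0 1) (hy : y ∈ sphere 0 1) (hxL : x ∉ L) (hyL : y ∉ L) :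
    ∃ v t, ⟪v, x⟫ < t ∧ ⟪v, y⟫ < t ∧ L ⊆ {p | t < ⟪v, p⟫} := by
  rcases hL.eq_empty_or_singleton with rfl | ⟨ζ, rfl⟩
  · exact ⟨0, 1, by simp, by simp, empty_subset _⟩
  have hζ : ‖ζ‖ = 1 := by simpa using hLs rfl
  have hlt : ∀ {p : E}, p ∈ sphere 0 1 → p ∉ ({ζ} : Set E) → ⟪ζ, p⟫ < 1 := fun hp hpζ =>
    (inner_lt_one_iff_real_of_norm_eq_one hζ (by simpa using hp)).2 (Ne.symm hpζ)
  obtain ⟨t, ht, ht1⟩ := exists_between (max_lt (hlt hx hxL) (hlt hy hyL))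
  refine ⟨ζ, t, (le_max_left _ _).trans_lt ht, (le_max_right _ _).trans_lt ht, ?_⟩
  rintro _ rfl
  simpa [real_inner_self_eq_norm_sq, hζ] using ht1

end InnerProductSpace

lemma connectedComponentIn_mem_nhdsWithin {X : Type*} [TopologicalSpace X] {M F : Set X}
    [LocallyConnectedSpace M] {x : X} (hx : x ∈ M) (hF : F ∈ 𝓝[M] x) :
    connectedComponentIn F x ∈ 𝓝[M] x := by
  rw [nhdsWithin_eq_map_subtype_coe hx] at hF ⊢
  refine mem_map.2 (mem_of_superset (connectedComponentIn_mem_nhds (mem_map.1 hF)) fun p hp => ?_)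
  exact connectedComponentIn_mono _ (image_preimage_subset _ _)
    (continuous_subtype_val.continuousOn.image_connectedComponentIn_subset
      (mem_of_mem_nhds (mem_map.1 hF)) ⟨p, hp, rfl⟩)

lemma eventually_subset_of_setLimsup_subset {X : Type*} [TopologicalSpace X] {K U : Set X}
    {S : ℕ → Set X} (hK : IsCompact K) (hU : IsOpen U) (hSK : ∀ k, S k ⊆ K)
    (h : setLimsup S ⊆ U) : ∀ᶠ k in atTop, S k ⊆ U := by
  have hanti : Antitone fun N => closure (⋃ k ≥ N, S k) := fun N M hNM =>
    closure_mono (biUnion_subset_biUnion_left fun k hk => hNM.trans hk)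
  obtain ⟨N, hN⟩ := (hK.diff hU).elim_directed_family_closed _ (fun _ => isClosed_closure)
    (eq_empty_of_forall_notMem fun p ⟨⟨_, hpU⟩, hp⟩ => hpU (h hp)) hanti.directed_ge
  filter_upwards [eventually_ge_atTop N] with k hk p hp
  by_contra hpU
  exact (eq_empty_iff_forall_notMem.1 hN) p ⟨⟨hSK k hp, hpU⟩, subset_closure (mem_biUnion hk hp)⟩

lemma SetsConvergeTo.eventually_inter_nonempty {X : Type*} [MetricSpace X] {K : ℕ → Set X}
    {L M W : Set X} {z : X} (h : SetsConvergeTo K L)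
    (hfin : ∀ k, Metric.hausdorffEDist (K k) L ≠ ⊤) (hKM : ∀ k, K k ⊆ M) (hz : z ∈ L)
    (hW : W ∈ 𝓝[M] z) : ∀ᶠ k in atTop, (K k ∩ W).Nonempty := by
  obtain ⟨ε, hε, hεW⟩ := Metric.mem_nhdsWithin_iff.1 hW
  filter_upwards [h.eventually_lt_const hε] with k hk
  obtain ⟨u, hu, hdu⟩ := Metric.exists_dist_lt_of_hausdorffDist_lt' hz hk (hfin k)
  exact ⟨u, hu, hεW ⟨hdu, hKM k hu⟩⟩

instance unitSphere.locallyConnectedSpace (n : ℕ) : LocallyConnectedSpace (unitSphere n) :=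
  have : Fact (finrank ℝ (Euc n) = n + 1) := ⟨finrank_euclideanSpace_fin⟩
  ChartedSpace.locallyConnectedSpace (EuclideanSpace ℝ (Fin n)) (sphere (0 : Euc n) 1)

namespace IsCircle

variable {n : ℕ} {S T : Set (Euc n)}

lemma subset_unitSphere (hS : IsCircle n S) : S ⊆ unitSphere n := by
  obtain ⟨P, -, rfl, -⟩ := hS
  exact inter_subset_left

lemma isPreconnected_inter_halfspace (hS : IsCircle n S) (v : Euc n) (t : ℝ) :
    IsPreconnected (S ∩ {p | ⟪v, p⟫ ≤ t}) := by
  obtain ⟨P, hP, rfl, -⟩ := hS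
  exact AffineSubspace.isPreconnected_sphere_inter_inter_halfspace hP 0 1 v t

lemma nonempty (hS : IsCircle n S) : S.Nonempty := by
  obtain ⟨-, -, -, hinf⟩ := hS
  exact hinf.nonempty

lemma hausdorffEDist_ne_top (hS : IsCircle n S) (hT : IsCircle n T) :
    Metric.hausdorffEDist S T ≠ ⊤ :=
  Metric.hausdorffEDist_ne_top_of_nonempty_of_bounded hS.nonempty
    hT.nonempty (isBounded_sphere.subset hS.subset_unitSphere)
    (isBounded_sphere.subset hT.subset_unitSphere)

lemma eventually_inter_connectedComponentIn_nonempty {Λ C : Set (Euc n)} {Ck : ℕ → Set (Euc n)}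
    (hΛ : IsClosed Λ) (hC : IsCircle n C) (hCk : ∀ k, IsCircle n (Ck k))
    (hconv : SetsConvergeTo Ck C) {z : Euc n} (hzC : z ∈ C) (hzΩ : z ∈ unitSphere n \ Λ)
    {W : Set (Euc n)} (hW : W ∈ 𝓝 z) :
    ∀ᶠ k in atTop, (Ck k ∩ (connectedComponentIn (unitSphere n \ Λ) z ∩ W)).Nonempty := by
  have hΩ : unitSphere n \ Λ ∈ 𝓝[unitSphere n] z :=
    inter_mem_nhdsWithin _ (hΛ.isOpen_compl.mem_nhds hzΩ.2)
  exact hconv.eventually_inter_nonempty (fun k => (hCk k).hausdorffEDist_ne_top hC)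
    (fun k => (hCk k).subset_unitSphere) hzC
    (inter_mem (connectedComponentIn_mem_nhdsWithin hzΩ.1 hΩ) (mem_nhdsWithin_of_mem_nhds hW))

lemma connectedComponentIn_eq_of_inter_subset_halfspace {Λ : Set (Euc n)} (hS : IsCircle n S)
    {v : Euc n} {t : ℝ} (hSΛ : S ∩ Λ ⊆ {p | t < ⟪v, p⟫}) {u w : Euc n} (hu : u ∈ S)
    (hut : ⟪v, u⟫ ≤ t) (hw : w ∈ S) (hwt : ⟪v, w⟫ ≤ t) :
    connectedComponentIn (unitSphere n \ Λ) u = connectedComponentIn (unitSphere n \ Λ) w := by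
  have hAΩ : S ∩ {p | ⟪v, p⟫ ≤ t} ⊆ unitSphere n \ Λ := fun p ⟨hpS, (hpt : ⟪v, p⟫ ≤ t)⟩ =>
    ⟨hS.subset_unitSphere hpS, fun hpΛ => hpt.not_gt (hSΛ ⟨hpS, hpΛ⟩)⟩
  exact connectedComponentIn_eq
    ((hS.isPreconnected_inter_halfspace v t).subset_connectedComponentIn ⟨hu, hut⟩ hAΩ ⟨hw, hwt⟩)

end IsCircle

lemma exists_isCircle_of_ne {n : ℕ} {ξ x y : Euc n} (hξ : ξ ∈ unitSphere n)
    (hx : x ∈ unitSphere n) (hy : y ∈ unitSphere n) (hξx : ξ ≠ x) (hξy : ξ ≠ y) (hxy : x ≠ y) :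
    ∃ C, IsCircle n C ∧ ξ ∈ C ∧ x ∈ C ∧ y ∈ C := by
  have hcosph : Cospherical ({ξ, x, y} : Set (Euc n)) :=
    ⟨0, 1, by rintro p (rfl | rfl | rfl) <;> assumption⟩
  set P := affineSpan ℝ (range ![ξ, x, y])
  have hP : finrank ℝ P.direction = 2 := by
    rw [direction_affineSpan]
    exact (hcosph.affineIndependent_of_ne hξx hξy hxy).finrank_vectorSpan (by simp)
  have hmem : ∀ i, ![ξ, x, y] i ∈ unitSphere n ∩ P := fun i =>
    ⟨by fin_cases i <;> assumption, subset_affineSpan ℝ _ (mem_range_self i)⟩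
  refine ⟨unitSphere n ∩ P, ⟨P, hP, rfl, ?_⟩, hmem 0, hmem 1, hmem 2⟩
  refine IsPreconnected.infinite_of_nontrivial ?_ ⟨ξ, hmem 0, x, hmem 1, hξx⟩
  simpa [unitSphere] using AffineSubspace.isPreconnected_sphere_inter_inter_halfspace hP 0 1 0 0

theorem doublyStable_of_WKM_of_two_components_general
    (n : ℕ) (Λ : Set (Euc n)) (hΛsub : Λ ⊆ unitSphere n)
    (hΛcl : IsClosed Λ)
    (htwo : ∃ x ∈ unitSphere n \ Λ, ∃ y ∈ unitSphere n \ Λ,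
      connectedComponentIn (unitSphere n \ Λ) x ≠
        connectedComponentIn (unitSphere n \ Λ) y) :
    DoublyStable n Λ := by
  intro ξ hξ
  obtain ⟨x, hx, y, hy, hxy⟩ := htwo
  set Ω := unitSphere n \ Λ
  obtain ⟨C, hC, hξC, hxC, hyC⟩ := exists_isCircle_of_ne (hΛsub hξ) hx.1 hy.1
    (ne_of_mem_of_not_mem hξ hx.2) (ne_of_mem_of_not_mem hξ hy.2) (ne_of_apply_ne _ hxy)
  refine ⟨C, hC, hξC, fun Ck hCk hconv => ?_⟩
  by_contra hL
  have hLΛ : setLimsup (fun k => Ck k ∩ Λ) ⊆ Λ :=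
    (iInter_subset _ 0).trans (closure_minimal (iUnion₂_subset fun k _ => inter_subset_right) hΛcl)
  obtain ⟨v, t, hvx, hvy, hLt⟩ := exists_inner_lt_of_subsingleton (not_nontrivial_iff.1 hL)
    (hLΛ.trans hΛsub) hx.1 hy.1 (fun h => hx.2 (hLΛ h)) (fun h => hy.2 (hLΛ h))
  have hcont : Continuous fun p : Euc n => ⟪v, p⟫ := continuous_const.inner continuous_id
  have hslice : ∀ᶠ k in atTop, Ck k ∩ Λ ⊆ {p | t < ⟪v, p⟫} :=
    eventually_subset_of_setLimsup_subset ((isCompact_sphere 0 1).of_isClosed_subset hΛcl hΛsub)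
      (isOpen_lt continuous_const hcont) (fun _ => inter_subset_right) hLt
  have hnear : ∀ z ∈ C, z ∈ Ω → ⟪v, z⟫ < t →
      ∀ᶠ k in atTop, (Ck k ∩ (connectedComponentIn Ω z ∩ {p | ⟪v, p⟫ < t})).Nonempty :=
    fun z hzC hzΩ hzt => IsCircle.eventually_inter_connectedComponentIn_nonempty hΛcl hC hCk
      hconv hzC hzΩ ((isOpen_lt hcont continuous_const).mem_nhds hzt)
  obtain ⟨k, hk, ⟨u, huk, hux, (hut : ⟪v, u⟫ < t)⟩, ⟨w, hwk, hwy, (hwt : ⟪v, w⟫ < t)⟩⟩ :=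
    (hslice.and ((hnear x hxC hx hvx).and (hnear y hyC hy hvy))).exists
  exact hxy ((connectedComponentIn_eq hux).trans
    (((hCk k).connectedComponentIn_eq_of_inter_subset_halfspace hk huk hut.le hwk hwt.le).trans
      (connectedComponentIn_eq hwy).symm))

/-- Group-free form of Lemma 4.6: if `Ω = S^n \ Λ` satisfies WKM and has at least
two connected components, then `Λ` is doubly stable. -/
theorem doublyStable_of_WKM_of_two_components
    (n : ℕ) (hn : 2 ≤ n) (Λ : Set (Euc n)) (hΛsub : Λ ⊆ unitSphere n)
    (hΛcl : IsClosed Λ) (hWKM : WKM (unitSphere n \ Λ))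
    (htwo : ∃ x ∈ unitSphere n \ Λ, ∃ y ∈ unitSphere n \ Λ,
      connectedComponentIn (unitSphere n \ Λ) x ≠
        connectedComponentIn (unitSphere n \ Λ) y) :
    DoublyStable n Λ :=
  doublyStable_of_WKM_of_two_components_general n Λ hΛsub hΛcl htwo
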